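/- Let μ > 0, L₂ > 0, let f : E → ℝ be μ-strongly star-convex with respect to a global minimizer x* with f(x₀) > f(x*), have L₂-Lipschitz-continuous second derivative, let M₂ ≥ L₂, and let D > 0 satisfy ‖x − x*‖ ≤ D whenever f(x) ≤ f(x₀). Let (x_t) be generated by Cubic Regularized Newton steps (x_{t+1} a global minimizer of Ω_{x_t,M₂}). Set α^{low} = min{1/2, √(3μ/(4(M₂+L₂)D))}, κ_t^{sl} = ((M₂+L₂)·√2/(3μ^{3/2}))·(1−α^{low})^{t/2}·(f(x₀) − f(x*))^{1/2}, and α_t^{sl} = (−1 + √(1 + 4κ_t^{sl}))/(2κ_t^{sl}). Then: (i) for every t ≥ 0, f(x_{t+1}) − f(x*) ≤ (1 − α_t^{sl})·(f(x_t) − f(x*)); (ii) the contraction factors improve at each step: α_t^{sl} < α_{t+1}^{sl} < 1 for all t (global superlinear convergence); and (iii) for every T ≥ 1, f(x_T) − f(x*) ≤ (f(x₀) − f(x*))·∏_{t=0}^{T−1} (1 − α_t^{sl}). -/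

import Mathlib

open scoped RealInnerProductSpace

section
variable {E : Type*} [NormedAddCommGroup E] [InnerProductSpace ℝ E]

/-- `f` is `μ`-uniformly star-convex of degree `q` with respect to `xs`. -/
def UniformlyStarConvex (f : E → ℝ) (xs : E) (q : ℕ) (μ : ℝ) : Prop :=
  ∀ x : E, ∀ α : ℝ, 0 ≤ α → α ≤ 1 →
    f (α • x + (1 - α) • xs) ≤
      α * f x + (1 - α) * f xs - α * (1 - α) * μ / q * ‖x - xs‖ ^ q

/-- `f` has `L`-Lipschitz-continuous `p`-th derivative. -/
def HasLipschitzDeriv (f : E → ℝ) (p : ℕ) (L : ℝ) : Prop :=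
  ContDiff ℝ p f ∧
    ∀ x y : E, ‖iteratedFDeriv ℝ p f x - iteratedFDeriv ℝ p f y‖ ≤ L * ‖x - y‖

/-- The `p`-th order Taylor polynomial `Φ_{x,p}(y)` of `f` at `x`. -/
noncomputable def taylorPoly (f : E → ℝ) (p : ℕ) (x y : E) : ℝ :=
  f x + ∑ k ∈ Finset.Icc 1 p,
    (1 / (Nat.factorial k : ℝ)) * iteratedFDeriv ℝ k f x (fun _ => y - x)

/-- The tensor model `Ω_{x,M}(y)`. -/
noncomputable def tensorModel (f : E → ℝ) (p : ℕ) (M : ℝ) (x y : E) : ℝ :=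
  taylorPoly f p x y + M / (Nat.factorial (p + 1) : ℝ) * ‖y - x‖ ^ (p + 1)

/-- `xp` is a basic `p`-th order tensor step from `x` with parameter `M`
(a global minimizer of the model). -/
def IsTensorStep (f : E → ℝ) (p : ℕ) (M : ℝ) (x xp : E) : Prop :=
  ∀ y : E, tensorModel f p M x xp ≤ tensorModel f p M x y

end

/-! A cubic Newton step does at least as well as any point `y`, up to the error
`(M + L) / 6 * ‖y - x‖ ^ 3` (Taylor bound plus minimality of the model). Testing `y` on the
segment from `x t` to `xs` and using strong star-convexity gives
`f (x (t + 1)) - f xs ≤ (1 - α) * (f (x t) - f xs)` as soon as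
`(M + L) / 6 * α ^ 2 * ‖x t - xs‖ ≤ (1 - α) * (μ / 2)`. Since `‖x t - xs‖ ≤ D`, this holds for
`αlow`, which gives linear convergence. Quadratic growth
`μ / 2 * ‖x t - xs‖ ^ 2 ≤ f (x t) - f xs` then bounds `‖x t - xs‖` by a geometrically
decreasing multiple of `κ t`, and the condition holds for the root `α` of
`κ t * α ^ 2 = 1 - α`, which increases as `κ t` decreases. -/

open Set

lemma antitoneOn_Icc_of_hasDerivAt_nonpos {φ φ' : ℝ → ℝ} {a b : ℝ}
    (hφ : ∀ t, HasDerivAt φ (φ' t) t) (hφ' : ∀ t ∈ Icc a b, φ' t ≤ 0) :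
    AntitoneOn φ (Icc a b) :=
  antitoneOn_of_hasDerivWithinAt_nonpos (convex_Icc a b)
    (fun t _ => (hφ t).continuousAt.continuousWithinAt) (fun t _ => (hφ t).hasDerivWithinAt)
    (fun t ht => hφ' t (interior_subset ht))

lemma taylor_remainder_two_le {g g' g'' : ℝ → ℝ} {C : ℝ}
    (hg : ∀ t, HasDerivAt g (g' t) t) (hg' : ∀ t, HasDerivAt g' (g'' t) t)
    (hC : ∀ t ∈ Icc (0 : ℝ) 1, g'' t - g'' 0 ≤ C * t) :
    g 1 - g 0 - g' 0 - g'' 0 / 2 ≤ C / 6 := by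
  -- Integrate the bound twice, as two monotonicity arguments: first for the remainder of `g'`,
  -- then for that of `g`, both vanishing at `0`.
  have h01 : (0 : ℝ) ∈ Icc 0 1 := ⟨le_rfl, zero_le_one⟩
  have hψ : ∀ t ∈ Icc (0 : ℝ) 1, g' t - g' 0 - t * g'' 0 - C * t ^ 2 / 2 ≤ 0 := by
    have hanti := antitoneOn_Icc_of_hasDerivAt_nonpos (a := 0) (b := 1)
      (fun t => (((hg' t).sub_const (g' 0)).sub ((hasDerivAt_id t).mul_const (g'' 0))).sub
        (((hasDerivAt_pow 2 t).const_mul C).div_const 2))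
      (fun t ht => by have := hC t ht; norm_num; linarith)
    intro t ht
    simpa using hanti h01 ht ht.1
  have hanti := antitoneOn_Icc_of_hasDerivAt_nonpos (a := 0) (b := 1)
      (fun t => ((((hg t).sub_const (g 0)).sub ((hasDerivAt_id t).mul_const (g' 0))).sub
        (((hasDerivAt_pow 2 t).mul_const (g'' 0)).div_const 2)).sub
        (((hasDerivAt_pow 3 t).const_mul C).div_const 6))
      (fun t ht => by have := hψ t ht; norm_num; linarith)
  have := hanti h01 ⟨zero_le_one, le_rfl⟩ zero_le_one
  norm_num at this
  linarith

lemma abs_taylor_remainder_two_le {g g' g'' : ℝ → ℝ} {C : ℝ}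
    (hg : ∀ t, HasDerivAt g (g' t) t) (hg' : ∀ t, HasDerivAt g' (g'' t) t)
    (hC : ∀ t ∈ Icc (0 : ℝ) 1, |g'' t - g'' 0| ≤ C * t) :
    |g 1 - g 0 - g' 0 - g'' 0 / 2| ≤ C / 6 := by
  have hle := taylor_remainder_two_le hg hg' fun t ht => (abs_le.mp (hC t ht)).2
  have hge := taylor_remainder_two_le (fun t => (hg t).neg) (fun t => (hg' t).neg)
    fun t ht => by linarith [(abs_le.mp (hC t ht)).1]
  simp only [Pi.neg_apply] at hge
  exact abs_le.mpr ⟨by linarith, hle⟩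

/-- The positive root `α` of `κ * α ^ 2 = 1 - α`. -/
noncomputable def superlinearRate (κ : ℝ) : ℝ := (-1 + √(1 + 4 * κ)) / (2 * κ)

section superlinearRate

variable {κ : ℝ}

lemma superlinearRate_eq (hκ : 0 < κ) : superlinearRate κ = 2 / (1 + √(1 + 4 * κ)) := by
  have hs : √(1 + 4 * κ) ^ 2 = 1 + 4 * κ := Real.sq_sqrt (by linarith)
  rw [superlinearRate, div_eq_div_iff (by positivity) (by positivity)]
  nlinarith

lemma one_lt_sqrt_one_add_four_mul (hκ : 0 < κ) : 1 < √(1 + 4 * κ) := by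
  rw [Real.lt_sqrt zero_le_one]
  linarith

lemma superlinearRate_pos (hκ : 0 < κ) : 0 < superlinearRate κ := by
  rw [superlinearRate_eq hκ]
  positivity

lemma superlinearRate_lt_one (hκ : 0 < κ) : superlinearRate κ < 1 := by
  rw [superlinearRate_eq hκ, div_lt_one (by positivity)]
  linarith [one_lt_sqrt_one_add_four_mul hκ]

lemma mul_superlinearRate_sq (hκ : 0 < κ) :
    κ * superlinearRate κ ^ 2 = 1 - superlinearRate κ := by
  have hs : √(1 + 4 * κ) ^ 2 = 1 + 4 * κ := Real.sq_sqrt (by linarith)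
  have hs1 := one_lt_sqrt_one_add_four_mul hκ
  rw [superlinearRate_eq hκ]
  generalize √(1 + 4 * κ) = s at hs hs1 ⊢
  field_simp
  nlinarith

lemma superlinearRate_strictAntiOn : StrictAntiOn superlinearRate (Ioi 0) := by
  intro κ₁ hκ₁ κ₂ hκ₂ hlt
  rw [superlinearRate_eq hκ₁, superlinearRate_eq hκ₂]
  gcongr
  linarith [mem_Ioi.mp hκ₁]

end superlinearRate

/-- `κ_t^{sl}`, with `A = M₂ + L₂`, `q = 1 - α^{low}` and `δ = f(x₀) - f(x*)`. -/
noncomputable def superlinearKappa (A μ q δ : ℝ) (t : ℕ) : ℝ :=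
  A * √2 / (3 * μ ^ ((3 : ℝ) / 2)) * q ^ ((t : ℝ) / 2) * δ ^ ((1 : ℝ) / 2)

section superlinearKappa

variable {A μ q δ : ℝ}

lemma superlinearKappa_pos (hA : 0 < A) (hμ : 0 < μ) (hq : 0 < q) (hδ : 0 < δ) (t : ℕ) :
    0 < superlinearKappa A μ q δ t := by
  unfold superlinearKappa
  positivity

lemma superlinearKappa_strictAnti (hA : 0 < A) (hμ : 0 < μ) (hq0 : 0 < q) (hq1 : q < 1)
    (hδ : 0 < δ) : StrictAnti (superlinearKappa A μ q δ) := by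
  refine strictAnti_nat_of_succ_lt fun t => ?_
  unfold superlinearKappa
  gcongr
  · exact Real.rpow_lt_rpow_of_exponent_gt hq0 hq1 (by push_cast; linarith)

lemma superlinearKappa_mul_eq (hμ : 0 < μ) (hq : 0 ≤ q) (t : ℕ) :
    superlinearKappa A μ q δ t * (μ / 2) = A / 6 * √(2 * (q ^ t * δ) / μ) := by
  have hμ32 : μ ^ ((3 : ℝ) / 2) = μ * √μ := by
    rw [show (3 : ℝ) / 2 = 1 + 1 / 2 by norm_num, Real.rpow_add hμ, Real.rpow_one,
      Real.sqrt_eq_rpow]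
  have hqt : q ^ ((t : ℝ) / 2) = √(q ^ t) := by
    rw [Real.sqrt_eq_rpow, ← Real.rpow_natCast, ← Real.rpow_mul hq]
    ring_nf
  have hμs : 0 < √μ := Real.sqrt_pos.mpr hμ
  rw [superlinearKappa, hμ32, hqt, ← Real.sqrt_eq_rpow, Real.sqrt_div' _ hμ.le,
    Real.sqrt_mul zero_le_two, Real.sqrt_mul (pow_nonneg hq t)]
  field_simp
  ring

lemma mul_le_superlinearKappa_mul (hA : 0 ≤ A) (hμ : 0 < μ) (hq : 0 ≤ q) {r : ℝ} {t : ℕ}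
    (hr : μ / 2 * r ^ 2 ≤ q ^ t * δ) :
    A / 6 * r ≤ superlinearKappa A μ q δ t * (μ / 2) := by
  rw [superlinearKappa_mul_eq hμ hq]
  refine mul_le_mul_of_nonneg_left (Real.le_sqrt_of_sq_le ?_) (by positivity)
  rw [le_div_iff₀ hμ]
  linarith

end superlinearKappa

lemma le_mul_prod_of_succ_le_mul {a c : ℕ → ℝ} (hc : ∀ t, 0 ≤ c t)
    (h : ∀ t, a (t + 1) ≤ c t * a t) (T : ℕ) : a T ≤ a 0 * ∏ t ∈ Finset.range T, c t := by
  induction T with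
  | zero => simp
  | succ T ih =>
    calc a (T + 1) ≤ c T * a T := h T
      _ ≤ c T * (a 0 * ∏ t ∈ Finset.range T, c t) := by gcongr; exact hc T
      _ = a 0 * ∏ t ∈ Finset.range (T + 1), c t := by rw [Finset.prod_range_succ]; ring

section TensorStep

variable {E : Type*} [NormedAddCommGroup E] [InnerProductSpace ℝ E]

lemma taylorPoly_two (f : E → ℝ) (x y : E) :
    taylorPoly f 2 x y =
      f x + fderiv ℝ f x (y - x) + iteratedFDeriv ℝ 2 f x (fun _ => y - x) / 2 := by
  rw [taylorPoly, show Finset.Icc 1 2 = {1, 2} from rfl, Finset.sum_pair (by norm_num),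
    iteratedFDeriv_one_apply]
  norm_num [Nat.factorial]
  ring

lemma HasLipschitzDeriv.abs_sub_taylorPoly_le {f : E → ℝ} {L : ℝ}
    (hf : HasLipschitzDeriv f 2 L) (x y : E) :
    |f y - taylorPoly f 2 x y| ≤ L / 6 * ‖y - x‖ ^ 3 := by
  obtain ⟨hf2, hlip⟩ := hf
  set h := y - x
  have hdf : Differentiable ℝ f := hf2.differentiable (by norm_num)
  have hdf' : Differentiable ℝ (fderiv ℝ f) :=
    (hf2.fderiv_right (m := 1) (by norm_num)).differentiable (by norm_num)
  have hline : ∀ t : ℝ, HasDerivAt (fun s : ℝ => x + s • h) h t := fun t => by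
    simpa using ((hasDerivAt_id t).smul_const h).const_add x
  have hg : ∀ t : ℝ, HasDerivAt (fun s => f (x + s • h)) (fderiv ℝ f (x + t • h) h) t :=
    fun t => (hdf _).hasFDerivAt.comp_hasDerivAt t (hline t)
  have hg' : ∀ t : ℝ, HasDerivAt (fun s => fderiv ℝ f (x + s • h) h)
      (iteratedFDeriv ℝ 2 f (x + t • h) (fun _ => h)) t := fun t => by
    rw [iteratedFDeriv_two_apply]
    simpa using
      ((hdf' _).hasFDerivAt.comp_hasDerivAt t (hline t)).clm_apply (hasDerivAt_const t h)
  have hC : ∀ t ∈ Icc (0 : ℝ) 1, |iteratedFDeriv ℝ 2 f (x + t • h) (fun _ => h) -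
      iteratedFDeriv ℝ 2 f (x + (0 : ℝ) • h) (fun _ => h)| ≤ L * ‖h‖ ^ 3 * t := by
    intro t ht
    rw [zero_smul, add_zero, ← sub_apply]
    calc _ ≤ ‖iteratedFDeriv ℝ 2 f (x + t • h) - iteratedFDeriv ℝ 2 f x‖ * ∏ _i : Fin 2, ‖h‖ :=
          ContinuousMultilinearMap.le_opNorm _ _
      _ ≤ L * ‖x + t • h - x‖ * ‖h‖ ^ 2 := by
          rw [Fin.prod_const]; gcongr; exact hlip _ _
      _ = L * ‖h‖ ^ 3 * t := by
          rw [add_sub_cancel_left, norm_smul, Real.norm_of_nonneg ht.1]; ring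
  have key := abs_taylor_remainder_two_le hg hg' hC
  simp only [zero_smul, one_smul, add_zero, h, add_sub_cancel] at key
  rw [taylorPoly_two]
  convert key using 2 <;> ring

variable {f : E → ℝ} {xs x xp : E} {μ L M : ℝ}

lemma IsTensorStep.le_add_cube (hf : HasLipschitzDeriv f 2 L) (hM : L ≤ M)
    (hs : IsTensorStep f 2 M x xp) (y : E) :
    f xp ≤ f y + (M + L) / 6 * ‖y - x‖ ^ 3 := by
  have hxp := abs_le.mp (hf.abs_sub_taylorPoly_le x xp)
  have hy := abs_le.mp (hf.abs_sub_taylorPoly_le x y)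
  have hmodel := hs y
  simp only [tensorModel, show ((2 + 1).factorial : ℝ) = 6 by norm_num [Nat.factorial]] at hmodel
  nlinarith [mul_nonneg (sub_nonneg.mpr hM) (pow_nonneg (norm_nonneg (xp - x)) 3)]

lemma IsTensorStep.apply_le (hf : HasLipschitzDeriv f 2 L) (hM : L ≤ M)
    (hs : IsTensorStep f 2 M x xp) : f xp ≤ f x := by
  simpa using hs.le_add_cube hf hM x

open Filter Topology in
lemma UniformlyStarConvex.sq_le_sub (hsc : UniformlyStarConvex f xs 2 μ)
    (hmin : ∀ y, f xs ≤ f y) (z : E) : μ / 2 * ‖z - xs‖ ^ 2 ≤ f z - f xs := by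
  have hlim : Tendsto (fun α : ℝ => (1 - α) * (μ / 2 * ‖z - xs‖ ^ 2)) (𝓝[>] 0)
      (𝓝 (μ / 2 * ‖z - xs‖ ^ 2)) := by
    have hcont : Continuous fun α : ℝ => (1 - α) * (μ / 2 * ‖z - xs‖ ^ 2) := by fun_prop
    simpa using (hcont.tendsto 0).mono_left nhdsWithin_le_nhds
  refine le_of_tendsto hlim ?_
  filter_upwards [Ioc_mem_nhdsGT zero_lt_one] with α ⟨hα0, hα1⟩
  have hstar := hsc z α hα0.le hα1
  have hlow := hmin (α • z + (1 - α) • xs)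
  refine le_of_mul_le_mul_left ?_ hα0
  push_cast at hstar
  linarith

lemma IsTensorStep.sub_le (hf : HasLipschitzDeriv f 2 L) (hM : L ≤ M)
    (hsc : UniformlyStarConvex f xs 2 μ) (hs : IsTensorStep f 2 M x xp)
    {α : ℝ} (hα0 : 0 ≤ α) (hα1 : α ≤ 1) :
    f xp - f xs ≤ (1 - α) * (f x - f xs) - α * (1 - α) * (μ / 2) * ‖x - xs‖ ^ 2 +
      (M + L) / 6 * α ^ 3 * ‖x - xs‖ ^ 3 := by
  have hstar := hsc x (1 - α) (by linarith) (by linarith)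
  have hcube := hs.le_add_cube hf hM ((1 - α) • x + (1 - (1 - α)) • xs)
  have hdist : (1 - α) • x + (1 - (1 - α)) • xs - x = -(α • (x - xs)) := by module
  rw [hdist, norm_neg, norm_smul, Real.norm_of_nonneg hα0] at hcube
  push_cast at hstar
  nlinarith

lemma IsTensorStep.sub_le_mul_sub (hf : HasLipschitzDeriv f 2 L) (hM : L ≤ M)
    (hsc : UniformlyStarConvex f xs 2 μ) (hs : IsTensorStep f 2 M x xp)
    {α : ℝ} (hα0 : 0 ≤ α) (hα1 : α ≤ 1)
    (hα : (M + L) / 6 * α ^ 2 * ‖x - xs‖ ≤ (1 - α) * (μ / 2)) :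
    f xp - f xs ≤ (1 - α) * (f x - f xs) := by
  have hcube :
      (M + L) / 6 * α ^ 3 * ‖x - xs‖ ^ 3 ≤ α * (1 - α) * (μ / 2) * ‖x - xs‖ ^ 2 := by
    calc (M + L) / 6 * α ^ 3 * ‖x - xs‖ ^ 3
        = α * ‖x - xs‖ ^ 2 * ((M + L) / 6 * α ^ 2 * ‖x - xs‖) := by ring
      _ ≤ α * ‖x - xs‖ ^ 2 * ((1 - α) * (μ / 2)) := by gcongr
      _ = α * (1 - α) * (μ / 2) * ‖x - xs‖ ^ 2 := by ring
  linarith [hs.sub_le hf hM hsc hα0 hα1]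

lemma gap_le_pow_of_isTensorStep {x : ℕ → E} {D α : ℝ} (hf : HasLipschitzDeriv f 2 L)
    (hL : 0 ≤ L) (hM : L ≤ M) (hsc : UniformlyStarConvex f xs 2 μ)
    (hstep : ∀ t, IsTensorStep f 2 M (x t) (x (t + 1))) (hD : ∀ t, ‖x t - xs‖ ≤ D)
    (hα0 : 0 ≤ α) (hα1 : α ≤ 1) (hα : (M + L) / 6 * α ^ 2 * D ≤ (1 - α) * (μ / 2)) (t : ℕ) :
    f (x t) - f xs ≤ (1 - α) ^ t * (f (x 0) - f xs) := by
  have hcoef : 0 ≤ (M + L) / 6 * α ^ 2 := by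
    have : 0 ≤ M + L := by linarith
    positivity
  have hcontr (t : ℕ) : f (x (t + 1)) - f xs ≤ (1 - α) * (f (x t) - f xs) :=
    (hstep t).sub_le_mul_sub hf hM hsc hα0 hα1 <|
      (mul_le_mul_of_nonneg_left (hD t) hcoef).trans hα
  have := le_mul_prod_of_succ_le_mul (a := fun t => f (x t) - f xs)
    (fun _ => sub_nonneg.mpr hα1) hcontr t
  rwa [Finset.prod_const, Finset.card_range, mul_comm] at this

lemma IsTensorStep.sub_le_superlinearRate_mul (hf : HasLipschitzDeriv f 2 L) (hM : L ≤ M)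
    (hsc : UniformlyStarConvex f xs 2 μ) (hs : IsTensorStep f 2 M x xp) {κ : ℝ} (hκ : 0 < κ)
    (hr : (M + L) / 6 * ‖x - xs‖ ≤ κ * (μ / 2)) :
    f xp - f xs ≤ (1 - superlinearRate κ) * (f x - f xs) := by
  refine hs.sub_le_mul_sub hf hM hsc (superlinearRate_pos hκ).le (superlinearRate_lt_one hκ).le ?_
  calc (M + L) / 6 * superlinearRate κ ^ 2 * ‖x - xs‖
      = superlinearRate κ ^ 2 * ((M + L) / 6 * ‖x - xs‖) := by ring
    _ ≤ superlinearRate κ ^ 2 * (κ * (μ / 2)) := by gcongr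
    _ = (1 - superlinearRate κ) * (μ / 2) := by rw [← mul_superlinearRate_sq hκ]; ring

end TensorStep

theorem cubic_newton_global_superlinear_general {E : Type*} [NormedAddCommGroup E]
    [InnerProductSpace ℝ E]
    (f : E → ℝ) (xs : E) (μ L M D : ℝ)
    (hμ : 0 < μ) (hL : 0 < L) (hM : L ≤ M) (hD : 0 < D)
    (hmin : ∀ y : E, f xs ≤ f y)
    (hsc : UniformlyStarConvex f xs 2 μ)
    (hf : HasLipschitzDeriv f 2 L)
    (x : ℕ → E)
    (hgap : f xs < f (x 0))
    (hlev : ∀ z : E, f z ≤ f (x 0) → ‖z - xs‖ ≤ D)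
    (hstep : ∀ t : ℕ, IsTensorStep f 2 M (x t) (x (t + 1)))
    (αlow : ℝ)
    (hαlow : αlow = min (1 / 2) (Real.sqrt (3 * μ / (4 * (M + L) * D))))
    (κ : ℕ → ℝ)
    (hκ : ∀ t : ℕ, κ t = (M + L) * Real.sqrt 2 / (3 * μ ^ ((3 : ℝ) / 2)) *
      (1 - αlow) ^ ((t : ℝ) / 2) * (f (x 0) - f xs) ^ ((1 : ℝ) / 2))
    (αsl : ℕ → ℝ)
    (hαsl : ∀ t : ℕ, αsl t = (-1 + Real.sqrt (1 + 4 * κ t)) / (2 * κ t)) :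
    (∀ t : ℕ, f (x (t + 1)) - f xs ≤ (1 - αsl t) * (f (x t) - f xs)) ∧
      (∀ t : ℕ, αsl t < αsl (t + 1) ∧ αsl (t + 1) < 1) ∧
      (∀ T : ℕ, 1 ≤ T →
        f (x T) - f xs ≤ (f (x 0) - f xs) * ∏ t ∈ Finset.range T, (1 - αsl t)) := by
  replace hκ : κ = superlinearKappa (M + L) μ (1 - αlow) (f (x 0) - f xs) := funext hκ
  replace hαsl : αsl = fun t => superlinearRate (κ t) := funext hαsl
  subst hαsl
  have hML : 0 < M + L := by linarith
  have hgap0 : 0 < f (x 0) - f xs := sub_pos.mpr hgap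
  have hdescent : Antitone fun t => f (x t) :=
    antitone_nat_of_succ_le fun t => (hstep t).apply_le hf hM
  have hlevel (t : ℕ) : ‖x t - xs‖ ≤ D := hlev _ (hdescent t.zero_le)
  have hαlow0 : 0 < αlow := hαlow ▸ lt_min one_half_pos (Real.sqrt_pos.mpr (by positivity))
  have hαlow1 : αlow ≤ 1 / 2 := hαlow ▸ min_le_left _ _
  have hαlowD : (M + L) / 6 * αlow ^ 2 * D ≤ (1 - αlow) * (μ / 2) := by
    have hsq : αlow ^ 2 ≤ 3 * μ / (4 * (M + L) * D) :=
      (pow_le_pow_left₀ hαlow0.le (hαlow ▸ min_le_right _ _) 2).trans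
        (Real.sq_sqrt (by positivity)).le
    rw [le_div_iff₀ (by positivity)] at hsq
    nlinarith
  have hκ0 (t : ℕ) : 0 < κ t := hκ ▸ superlinearKappa_pos hML hμ (by linarith) hgap0 t
  have hκanti : StrictAnti κ :=
    hκ ▸ superlinearKappa_strictAnti hML hμ (by linarith) (by linarith) hgap0
  have hκr (t : ℕ) : (M + L) / 6 * ‖x t - xs‖ ≤ κ t * (μ / 2) :=
    hκ ▸ mul_le_superlinearKappa_mul hML.le hμ (by linarith) <| (hsc.sq_le_sub hmin _).trans <|
      gap_le_pow_of_isTensorStep hf hL.le hM hsc hstep hlevel hαlow0.le (by linarith) hαlowD t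
  have hcontr (t : ℕ) := (hstep t).sub_le_superlinearRate_mul hf hM hsc (hκ0 t) (hκr t)
  refine ⟨hcontr, fun t => ⟨?_, superlinearRate_lt_one (hκ0 _)⟩, fun T _ => ?_⟩
  · exact superlinearRate_strictAntiOn (hκ0 _) (hκ0 _) (hκanti t.lt_succ_self)
  · exact le_mul_prod_of_succ_le_mul (a := fun t => f (x t) - f xs)
      (fun t => sub_nonneg.mpr (superlinearRate_lt_one (hκ0 t)).le) hcontr T

theorem cubic_newton_global_superlinear {E : Type*} [NormedAddCommGroup E]
    [InnerProductSpace ℝ E] [FiniteDimensional ℝ E]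
    (f : E → ℝ) (xs : E) (μ L M D : ℝ)
    (hμ : 0 < μ) (hL : 0 < L) (hM : L ≤ M) (hD : 0 < D)
    (hmin : ∀ y : E, f xs ≤ f y)
    (hsc : UniformlyStarConvex f xs 2 μ)
    (hf : HasLipschitzDeriv f 2 L)
    (x : ℕ → E)
    (hgap : f xs < f (x 0))
    (hlev : ∀ z : E, f z ≤ f (x 0) → ‖z - xs‖ ≤ D)
    (hstep : ∀ t : ℕ, IsTensorStep f 2 M (x t) (x (t + 1)))
    (αlow : ℝ)
    (hαlow : αlow = min (1 / 2) (Real.sqrt (3 * μ / (4 * (M + L) * D))))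
    (κ : ℕ → ℝ)
    (hκ : ∀ t : ℕ, κ t = (M + L) * Real.sqrt 2 / (3 * μ ^ ((3 : ℝ) / 2)) *
      (1 - αlow) ^ ((t : ℝ) / 2) * (f (x 0) - f xs) ^ ((1 : ℝ) / 2))
    (αsl : ℕ → ℝ)
    (hαsl : ∀ t : ℕ, αsl t = (-1 + Real.sqrt (1 + 4 * κ t)) / (2 * κ t)) :
    (∀ t : ℕ, f (x (t + 1)) - f xs ≤ (1 - αsl t) * (f (x t) - f xs)) ∧
      (∀ t : ℕ, αsl t < αsl (t + 1) ∧ αsl (t + 1) < 1) ∧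
      (∀ T : ℕ, 1 ≤ T →
        f (x T) - f xs ≤ (f (x 0) - f xs) * ∏ t ∈ Finset.range T, (1 - αsl t)) :=
  cubic_newton_global_superlinear_general f xs μ L M D hμ hL hM hD hmin hsc hf x hgap hlev hstep
    αlow hαlow κ hκ αsl hαsl
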